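/- Let τ_spec ∈ iℝ with Im(τ_spec) > 0 and let Σ = ℂ/(ℤ + τ_spec ℤ). Let λ : Σ → ℂP¹ be the degree-2 elliptic map branched at [0], [1/2], [(1+τ_spec)/2], [τ_spec/2] with λ([0]) = 0, λ([1/2]) = r, λ([(1+τ_spec)/2]) = 1/r, λ([τ_spec/2]) = ∞ for some r ∈ (0,1). Assume λ∘σ = λ for the elliptic involution σ([ξ]) = [-ξ], and assume the symmetry λ([ξ + τ_spec/2]) = 1/conj(λ([ξ̄])) for all ξ. Then the preimage λ^{-1}(S¹) of the unit circle equals C⁺ ∪ C⁻, the union of the two disjoint circles C± = {[s ± τ_spec/4] : s ∈ ℝ} in Σ. -/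

import Mathlib

open Complex ComplexConjugate OnePoint

/-- The involution `λ ↦ 1/λ̄` of the Riemann sphere (fixing exactly the unit circle). -/
noncomputable def invConj : OnePoint ℂ → OnePoint ℂ
  | OnePoint.infty => ((0 : ℂ) : OnePoint ℂ)
  | (z : ℂ) => if z = 0 then OnePoint.infty else (((starRingEnd ℂ) z)⁻¹ : ℂ)

lemma invConj_coe (z : ℂ) : invConj (z : OnePoint ℂ) =
    if z = 0 then OnePoint.infty else (((starRingEnd ℂ) z)⁻¹ : ℂ) := rfl

lemma invConj_fix_of_abs {z : ℂ} (h : ‖z‖ = 1) :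
    invConj (z : OnePoint ℂ) = (z : OnePoint ℂ) := by
  have hz : z ≠ 0 := by intro h0; simp [h0] at h
  have hm : (starRingEnd ℂ) z * z = 1 := by
    rw [mul_comm, Complex.mul_conj, Complex.normSq_eq_norm_sq, h]; norm_num
  rw [invConj_coe, if_neg hz]
  congr 1
  exact inv_eq_of_mul_eq_one_right hm

lemma invConj_fixed {w : OnePoint ℂ} (h : invConj w = w) :
    ∃ z : ℂ, w = (z : OnePoint ℂ) ∧ ‖z‖ = 1 := by
  cases w with
  | infty => simp [invConj] at h
  | coe z =>
    rw [invConj_coe] at h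
    by_cases hz : z = 0
    · rw [if_pos hz] at h; exact absurd h (OnePoint.infty_ne_coe z)
    · rw [if_neg hz] at h
      refine ⟨z, rfl, ?_⟩
      have h2 : ((starRingEnd ℂ) z)⁻¹ = z := OnePoint.coe_injective h
      have : (starRingEnd ℂ) z * z = 1 := by
        rw [inv_eq_iff_eq_inv.mp h2, inv_mul_cancel₀ hz]
      rw [mul_comm, Complex.mul_conj, Complex.normSq_eq_norm_sq] at this
      have h1 : ‖z‖ ^ 2 = 1 := by exact_mod_cast this
      nlinarith [norm_nonneg z]

lemma im_eq_of_shift (τ : ℂ) (hτre : τ.re = 0) (ξ : ℂ) (k m : ℤ)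
    (heq : (starRingEnd ℂ) ξ + τ/2 - ξ = (m : ℂ) + (k : ℂ) * τ) :
    τ.im/2 - 2*ξ.im = (k:ℝ) * τ.im := by
  have := congrArg Complex.im heq
  simp [hτre, Complex.div_im, Complex.normSq] at this
  linarith

/-- for the rectangular elliptic curve `Σ = ℂ/(ℤ + τ_spec ℤ)` and the
degree-2 elliptic map λ with branch data `λ(0)=0, λ(1/2)=r, λ((1+τ)/2)=1/r, λ(τ/2)=∞`
and the reality symmetry `λ(ξ + τ/2) = 1/conj(λ(ξ̄))`, the preimage of the unit circle
is exactly the union of the two circles `C± = {[s ± τ/4] : s ∈ ℝ}` in Σ. -/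
theorem stmt_11 (τ : ℂ) (hτre : τ.re = 0) (hτim : 0 < τ.im)
    (r : ℝ) (hr0 : 0 < r) (hr1 : r < 1)
    (L : ℂ → OnePoint ℂ)
    (hper : ∀ (ξ : ℂ) (m n : ℤ), L (ξ + m + n * τ) = L ξ)
    (heven : ∀ ξ : ℂ, L (-ξ) = L ξ)
    (hsym : ∀ ξ : ℂ, L (ξ + τ / 2) = invConj (L (conj ξ)))
    (h0 : L 0 = ((0 : ℂ) : OnePoint ℂ))
    (hb1 : L (1 / 2) = ((r : ℂ) : OnePoint ℂ))
    (hb2 : L ((1 + τ) / 2) = ((((r : ℂ)⁻¹ : ℂ)) : OnePoint ℂ))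
    (hb3 : L (τ / 2) = OnePoint.infty)
    (hdeg : ∀ w : OnePoint ℂ, ∃ ξ₀ : ℂ, ∀ ξ : ℂ, L ξ = w →
      ∃ m n : ℤ, ξ = ξ₀ + m + n * τ ∨ ξ = -ξ₀ + m + n * τ) :
    {ξ : ℂ | ∃ z : ℂ, L ξ = (z : OnePoint ℂ) ∧ ‖z‖ = 1} =
      {ξ : ℂ | ∃ (s : ℝ) (m n : ℤ),
        ξ = (s : ℂ) + τ / 4 + m + n * τ ∨ ξ = (s : ℂ) - τ / 4 + m + n * τ} := by
  have hτ0 : τ.im ≠ 0 := ne_of_gt hτim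
  ext ξ
  simp only [Set.mem_setOf_eq]
  constructor
  · rintro ⟨z, hz, habs⟩
    have key : L ((starRingEnd ℂ) ξ + τ/2) = (z : OnePoint ℂ) := by
      calc L ((starRingEnd ℂ) ξ + τ/2)
          = invConj (L ((starRingEnd ℂ) ((starRingEnd ℂ) ξ))) := hsym _
        _ = invConj (L ξ) := by rw [Complex.conj_conj]
        _ = invConj (z : OnePoint ℂ) := by rw [hz]
        _ = (z : OnePoint ℂ) := invConj_fix_of_abs habs
    obtain ⟨ξ₀, hξ₀⟩ := hdeg (z : OnePoint ℂ)
    obtain ⟨m₁, n₁, h1⟩ := hξ₀ ξ hz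
    obtain ⟨m₂, n₂, h2⟩ := hξ₀ _ key
    have same : ((starRingEnd ℂ) ξ + τ/2 - ξ = ((m₂ - m₁ : ℤ) : ℂ) + ((n₂ - n₁ : ℤ) : ℂ) * τ) ∨
        ((starRingEnd ℂ) ξ + τ/2 + ξ = ((m₂ + m₁ : ℤ) : ℂ) + ((n₂ + n₁ : ℤ) : ℂ) * τ) := by
      rcases h1 with h1 | h1 <;> rcases h2 with h2 | h2
      · left; push_cast; linear_combination h2 - h1
      · right; push_cast; linear_combination h2 + h1
      · right; push_cast; linear_combination h2 + h1
      · left; push_cast; linear_combination h2 - h1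
    rcases same with hs | hs
    · -- ξ.im determined mod τ.im/2
      have him := im_eq_of_shift τ hτre ξ (n₂ - n₁) (m₂ - m₁) hs
      rcases Int.even_or_odd (n₂ - n₁) with ⟨j, hj⟩ | ⟨j, hj⟩
      · -- ξ.im = τ.im/4 - j τ.im  :  on C⁺
        refine ⟨ξ.re, 0, -j, Or.inl ?_⟩
        have hjr : ((n₂ - n₁ : ℤ) : ℝ) = 2 * (j : ℝ) := by rw [hj]; push_cast; ring
        rw [hjr] at him
        apply Complex.ext
        · push_cast; simp [hτre, Complex.div_re]
        · push_cast; simp [Complex.div_im, hτre]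
          linarith
      · -- ξ.im = -τ.im/4 - j τ.im  :  on C⁻
        refine ⟨ξ.re, 0, -j, Or.inr ?_⟩
        have hjr : ((n₂ - n₁ : ℤ) : ℝ) = 2 * (j : ℝ) + 1 := by rw [hj]; push_cast; ring
        rw [hjr] at him
        apply Complex.ext
        · push_cast; simp [hτre, Complex.div_re]
        · push_cast; simp [Complex.div_im, hτre]
          linarith
    · -- impossible case: τ.im/2 = n τ.im
      exfalso
      have him := congrArg Complex.im hs
      simp [hτre, Complex.div_im, Complex.normSq] at him
      have h3 : (2 * (n₂ + n₁) : ℤ) = 1 := by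
        have hc : ((2 * (n₂ + n₁) : ℤ) : ℝ) * τ.im = 1 * τ.im := by push_cast; linarith
        exact_mod_cast mul_right_cancel₀ hτ0 hc
      omega
  · rintro ⟨s, m, n, h | h⟩
    · rw [h, hper]
      have h1 := hsym ((s:ℂ) - τ/4)
      have e1 : (s:ℂ) - τ/4 + τ/2 = (s:ℂ) + τ/4 := by ring
      have e2 : (starRingEnd ℂ) ((s:ℂ) - τ/4) = (s:ℂ) + τ/4 := by
        apply Complex.ext <;> simp [hτre, Complex.div_re, Complex.div_im] <;> ring
      rw [e1, e2] at h1
      exact invConj_fixed h1.symm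
    · rw [h, hper]
      have h1 := hsym ((s:ℂ) + τ/4)
      have e1 : (s:ℂ) + τ/4 + τ/2 = (s:ℂ) - τ/4 + ((0:ℤ):ℂ) + ((1:ℤ):ℂ) * τ := by
        push_cast; ring
      have e2 : (starRingEnd ℂ) ((s:ℂ) + τ/4) = (s:ℂ) - τ/4 := by
        apply Complex.ext <;> simp [hτre, Complex.div_re, Complex.div_im] <;> ring
      rw [e1, hper ((s:ℂ) - τ/4) 0 1, e2] at h1
      exact invConj_fixed h1.symm
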